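/- Let Ω and E be measurable spaces, let P and Q be probability measures on Ω with P ≪ Q, and let π : Ω → E be measurable with π_*P = π_*Q = μ₀ (the common initial marginal). Let μ̂₀ be a probability measure on E that is mutually absolutely continuous with μ₀, and define the probability measure Q̂ on Ω by dQ̂/dQ = (dμ̂₀/dμ₀) ∘ π. Assume KL(P‖Q) < ∞ and KL(μ₀‖μ̂₀) < ∞. Then P ≪ Q̂ and KL(P‖Q̂) = KL(P‖Q) + KL(μ₀‖μ̂₀). -/
import Mathlib


open MeasureTheory

/-- if `P ≪ Q` are probability measures on path space `Ω` with common initial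
marginal `μ₀ = π_*P = π_*Q`, and `Q̂` is obtained from `Q` by reweighting the initial
distribution to `μ̂₀` (mutually absolutely continuous with `μ₀`), i.e.
`dQ̂/dQ = (dμ̂₀/dμ₀) ∘ π`, then (assuming `KL(P‖Q) < ⊤` and `KL(μ₀‖μ̂₀) < ⊤`) `P ≪ Q̂` and
`KL(P‖Q̂) = KL(P‖Q) + KL(μ₀‖μ̂₀)`, where `KL(μ‖ν) = ∫ log(dμ/dν) dμ`. -/
theorem stmt19 {Ω E : Type} [MeasurableSpace Ω] [MeasurableSpace E]
    (P Q : Measure Ω) [IsProbabilityMeasure P] [IsProbabilityMeasure Q]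
    (hPQ : P ≪ Q)
    (π : Ω → E) (hπ : Measurable π)
    (μ₀ μ₀hat : Measure E) [IsProbabilityMeasure μ₀] [IsProbabilityMeasure μ₀hat]
    (hP0 : Measure.map π P = μ₀) (hQ0 : Measure.map π Q = μ₀)
    (hac1 : μ₀ ≪ μ₀hat) (hac2 : μ₀hat ≪ μ₀)
    (hKLPQ : Integrable (fun ω => Real.log (P.rnDeriv Q ω).toReal) P)
    (hKL0 : Integrable (fun x => Real.log (μ₀.rnDeriv μ₀hat x).toReal) μ₀) :
    P ≪ Q.withDensity (fun ω => μ₀hat.rnDeriv μ₀ (π ω)) ∧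
    ∫ ω, Real.log ((P.rnDeriv (Q.withDensity (fun ω' => μ₀hat.rnDeriv μ₀ (π ω')))) ω).toReal ∂P
      = (∫ ω, Real.log (P.rnDeriv Q ω).toReal ∂P)
        + ∫ x, Real.log (μ₀.rnDeriv μ₀hat x).toReal ∂μ₀ := by
  set f : E → ENNReal := μ₀hat.rnDeriv μ₀ with hf_def
  have hf_meas : Measurable f := Measure.measurable_rnDeriv _ _
  have hg_meas : Measurable (fun ω => f (π ω)) := hf_meas.comp hπ
  -- f is positive and finite a.e. μ₀
  have hf_pos : ∀ᵐ x ∂μ₀, f x ≠ 0 := by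
    filter_upwards [hac1.ae_le (Measure.rnDeriv_pos hac2)] with x hx using hx.ne'
  have hf_ne_top : ∀ᵐ x ∂μ₀, f x ≠ ⊤ := Measure.rnDeriv_ne_top _ _
  -- transfer to Q via π
  have hQ_pos : ∀ᵐ ω ∂Q, f (π ω) ≠ 0 :=
    ae_of_ae_map hπ.aemeasurable (hQ0 ▸ hf_pos)
  have hQ_ne_top : ∀ᵐ ω ∂Q, f (π ω) ≠ ⊤ :=
    ae_of_ae_map hπ.aemeasurable (hQ0 ▸ hf_ne_top)
  have hQQhat : Q ≪ Q.withDensity (fun ω => f (π ω)) :=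
    withDensity_absolutelyContinuous' hg_meas.aemeasurable hQ_pos
  have hPQhat : P ≪ Q.withDensity (fun ω => f (π ω)) := hPQ.trans hQQhat
  refine ⟨hPQhat, ?_⟩
  -- the Radon-Nikodym derivative identity
  have hrn : P.rnDeriv (Q.withDensity (fun ω => f (π ω)))
      =ᵐ[Q] fun ω => (f (π ω))⁻¹ * P.rnDeriv Q ω :=
    Measure.rnDeriv_withDensity_right P Q hg_meas.aemeasurable hQ_pos hQ_ne_top
  -- inverse rnDeriv identity
  have hinv : ∀ᵐ x ∂μ₀, (μ₀.rnDeriv μ₀hat x)⁻¹ = f x := Measure.inv_rnDeriv hac1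
  have hinvP : ∀ᵐ ω ∂P, (μ₀.rnDeriv μ₀hat (π ω))⁻¹ = f (π ω) :=
    ae_of_ae_map hπ.aemeasurable
      (show ∀ᵐ x ∂Measure.map π P, (μ₀.rnDeriv μ₀hat x)⁻¹ = f x by rw [hP0]; exact hinv)
  have hP_pos : ∀ᵐ ω ∂P, f (π ω) ≠ 0 := ae_of_ae_map hπ.aemeasurable (hP0 ▸ hf_pos)
  have hP_ne_top : ∀ᵐ ω ∂P, f (π ω) ≠ ⊤ := ae_of_ae_map hπ.aemeasurable (hP0 ▸ hf_ne_top)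
  have hb_pos : ∀ᵐ ω ∂P, P.rnDeriv Q ω ≠ 0 := by
    filter_upwards [Measure.rnDeriv_pos hPQ] with ω hω using hω.ne'
  have hb_ne_top : ∀ᵐ ω ∂P, P.rnDeriv Q ω ≠ ⊤ := hPQ.ae_le (Measure.rnDeriv_ne_top _ _)
  -- pointwise log identity a.e. P
  have hlog : ∀ᵐ ω ∂P,
      Real.log ((P.rnDeriv (Q.withDensity (fun ω' => f (π ω')))) ω).toReal
        = Real.log (P.rnDeriv Q ω).toReal
          + Real.log (μ₀.rnDeriv μ₀hat (π ω)).toReal := by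
    filter_upwards [hPQ.ae_le hrn, hinvP, hP_pos, hP_ne_top, hb_pos, hb_ne_top]
      with ω h1 h2 h3 h4 h5 h6
    rw [h1]
    have ha : (f (π ω)).toReal ≠ 0 := ENNReal.toReal_ne_zero.mpr ⟨h3, h4⟩
    have hb : (P.rnDeriv Q ω).toReal ≠ 0 :=
      ENNReal.toReal_ne_zero.mpr ⟨h5, h6⟩
    rw [ENNReal.toReal_mul, Real.log_mul (by simpa [ENNReal.toReal_inv] using inv_ne_zero ha) hb,
      ENNReal.toReal_inv, Real.log_inv, ← h2, ENNReal.toReal_inv, Real.log_inv, neg_neg, add_comm]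
  rw [integral_congr_ae hlog]
  -- integrability of the second term
  have hmeas2 : AEStronglyMeasurable (fun x => Real.log (μ₀.rnDeriv μ₀hat x).toReal)
      (Measure.map π P) := by
    rw [hP0]
    exact ((Measure.measurable_rnDeriv _ _).ennreal_toReal.log).aestronglyMeasurable
  have hInt2 : Integrable (fun ω => Real.log (μ₀.rnDeriv μ₀hat (π ω)).toReal) P := by
    have := (integrable_map_measure hmeas2 hπ.aemeasurable).mp (by rw [hP0]; exact hKL0)
    exact this
  rw [integral_add hKLPQ hInt2]
  congr 1
  have h := integral_map hπ.aemeasurable hmeas2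
  rw [hP0] at h
  exact h.symm
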